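/- Let p, q ∈ ℝ^n be probability vectors and let C be a cost matrix of the form C_{ij} = a_i + b_j + D_{ij} where D is diagonal with nonpositive diagonal d_i ≤ 0. Then OT_C(p,q) = ∑_i a_i p_i + ∑_j b_j q_j + ∑_i min(p_i, q_i) d_i. -/

import Mathlib

/-!
Writing `C i j = a i + b j + D i j`, the marginal constraints turn the affine part of the cost
into the constant `∑ a p + ∑ b q`, so only `∑ d i π i i` remains to be minimised. Since `d ≤ 0`
and `π i i ≤ min (p i) (q i)` for every coupling, this is at least `∑ min (p i) (q i) d i`.
The bound is attained by putting `m = min p q` on the diagonal and coupling the residuals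
`p - m` and `q - m` independently: at each index one of the residuals vanishes, so the
independent part adds nothing to the diagonal.
-/

open Finset

variable {ι : Type*} [Fintype ι]

structure IsCoupling (p q : ι → ℝ) (π : ι → ι → ℝ) : Prop where
  nonneg : ∀ i j, 0 ≤ π i j
  sum_row : ∀ i, ∑ j, π i j = p i
  sum_col : ∀ j, ∑ i, π i j = q j

namespace IsCoupling

variable {p q p' q' : ι → ℝ} {π π' : ι → ι → ℝ}

theorem add (h : IsCoupling p q π) (h' : IsCoupling p' q' π') :
    IsCoupling (p + p') (q + q') (π + π') where
  nonneg i j := add_nonneg (h.nonneg i j) (h'.nonneg i j)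
  sum_row i := by simp [sum_add_distrib, h.sum_row, h'.sum_row]
  sum_col j := by simp [sum_add_distrib, h.sum_col, h'.sum_col]

theorem apply_self_le_min (h : IsCoupling p q π) (i : ι) : π i i ≤ min (p i) (q i) :=
  le_min (h.sum_row i ▸ single_le_sum (fun j _ => h.nonneg i j) (mem_univ i))
    (h.sum_col i ▸ single_le_sum (fun j _ => h.nonneg j i) (mem_univ i))

end IsCoupling

theorem isCoupling_diagonal [DecidableEq ι] {m : ι → ℝ} (hm : ∀ i, 0 ≤ m i) :
    IsCoupling m m (fun i j => if i = j then m i else 0) where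
  nonneg i j := by split_ifs <;> simp [hm]
  sum_row i := by simp
  sum_col j := by simp

-- When the common mass is `0` both vectors vanish, so the junk value `x / 0 = 0` is harmless.
theorem isCoupling_mul_div_sum {r s : ι → ℝ} (hr : ∀ i, 0 ≤ r i) (hs : ∀ i, 0 ≤ s i)
    (hrs : ∑ i, r i = ∑ i, s i) :
    IsCoupling r s (fun i j => r i * s j / ∑ k, s k) := by
  by_cases hS : ∑ k, s k = 0
  · have hr0 := (Fintype.sum_eq_zero_iff_of_nonneg hr).1 (hrs.trans hS)
    have hs0 := (Fintype.sum_eq_zero_iff_of_nonneg hs).1 hS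
    exact ⟨fun i j => by simp [hS], fun i => by simp [hS, hr0], fun j => by simp [hs0]⟩
  refine ⟨fun i j => div_nonneg (mul_nonneg (hr i) (hs j)) (sum_nonneg fun k _ => hs k),
    fun i => ?_, fun j => ?_⟩
  · rw [← sum_div, ← mul_sum, mul_div_cancel_right₀ _ hS]
  · rw [← sum_div, ← sum_mul, hrs, mul_div_cancel_left₀ _ hS]

theorem exists_isCoupling_apply_self_eq_min [DecidableEq ι] {p q : ι → ℝ} (hp : ∀ i, 0 ≤ p i)
    (hq : ∀ i, 0 ≤ q i) (hpq : ∑ i, p i = ∑ i, q i) :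
    ∃ π, IsCoupling p q π ∧ ∀ i, π i i = min (p i) (q i) := by
  set m : ι → ℝ := fun i => min (p i) (q i)
  have hm : ∀ i, 0 ≤ m i := fun i => le_min (hp i) (hq i)
  have hr : ∀ i, 0 ≤ (p - m) i := fun i => sub_nonneg.2 (min_le_left _ _)
  have hs : ∀ i, 0 ≤ (q - m) i := fun i => sub_nonneg.2 (min_le_right _ _)
  have hrs : ∑ i, (p - m) i = ∑ i, (q - m) i := by simp [sum_sub_distrib, hpq]
  have hπ := (isCoupling_diagonal hm).add (isCoupling_mul_div_sum hr hs hrs)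
  rw [add_sub_cancel, add_sub_cancel] at hπ
  refine ⟨_, hπ, fun i => ?_⟩
  have hres : (p i - m i) * (q i - m i) = 0 := by
    rcases le_total (p i) (q i) with h | h <;> simp [m, h]
  simp [hres, m]

theorem sum_sum_affine_cost_mul {p q a b : ι → ℝ} {D π : ι → ι → ℝ}
    (hrow : ∀ i, ∑ j, π i j = p i) (hcol : ∀ j, ∑ i, π i j = q j) :
    ∑ i, ∑ j, (a i + b j + D i j) * π i j
      = ∑ i, a i * p i + ∑ j, b j * q j + ∑ i, ∑ j, D i j * π i j := by
  simp only [add_mul, sum_add_distrib, ← mul_sum, hrow]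
  rw [sum_comm (f := fun i j => b j * π i j)]
  simp only [← mul_sum, hcol]

theorem sum_sum_diagonal_mul [DecidableEq ι] (d : ι → ℝ) (π : ι → ι → ℝ) :
    ∑ i, ∑ j, (if i = j then d i else 0) * π i j = ∑ i, d i * π i i := by
  simp [ite_mul]

/-- closed-form optimal transport cost for `C i j = a i + b j + D i j`
with `D` diagonal and nonpositive diagonal `d`. -/
theorem closed_form_ot {n : ℕ} (p q : Fin n → ℝ)
    (hp : ∀ i, 0 ≤ p i) (hp1 : ∑ i, p i = 1)
    (hq : ∀ i, 0 ≤ q i) (hq1 : ∑ i, q i = 1)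
    (a b d : Fin n → ℝ) (hd : ∀ i, d i ≤ 0) :
    IsLeast
      {x : ℝ | ∃ π : Fin n → Fin n → ℝ,
        (∀ i j, 0 ≤ π i j) ∧ (∀ i, ∑ j, π i j = p i) ∧ (∀ j, ∑ i, π i j = q j) ∧
        x = ∑ i, ∑ j, (a i + b j + (if i = j then d i else 0)) * π i j}
      ((∑ i, a i * p i) + (∑ j, b j * q j) + ∑ i, min (p i) (q i) * d i) := by
  constructor
  · obtain ⟨π, hπ, hdiag⟩ := exists_isCoupling_apply_self_eq_min hp hq (hp1.trans hq1.symm)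
    refine ⟨π, hπ.nonneg, hπ.sum_row, hπ.sum_col, ?_⟩
    rw [sum_sum_affine_cost_mul hπ.sum_row hπ.sum_col, sum_sum_diagonal_mul]
    simp [hdiag, mul_comm]
  · rintro x ⟨π, hnonneg, hrow, hcol, rfl⟩
    have hπ : IsCoupling p q π := ⟨hnonneg, hrow, hcol⟩
    rw [sum_sum_affine_cost_mul hrow hcol, sum_sum_diagonal_mul]
    refine add_le_add le_rfl (sum_le_sum fun i _ => ?_)
    rw [mul_comm]
    exact mul_le_mul_of_nonpos_left (hπ.apply_self_le_min i) (hd i)
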